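/- arXiv:1409.6731 — 4 statements merged into one kernel-verified Lean document; each statement's English description precedes it below -/
import Mathlib

section
/- Let S be a Polish space equipped with its Borel σ-algebra, let P be a Borel probability measure on S, and let (μ_k) be a sequence of Borel probability measures on S such that sup_k KL(μ_k ‖ P) < ∞. If (μ_k) converges weakly to a Borel probability measure μ, then for every bounded Borel measurable function f : S → ℝ one has ∫_S f dμ_k → ∫_S f dμ as k → ∞. -/
open MeasureTheory Filter Topology BoundedContinuousFunction Classical

/-- Relative entropy (Kullback–Leibler divergence): `∫ log (dμ/dP) dμ` when `μ ≪ P`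
(and the log-likelihood ratio is `μ`-integrable), and `+∞` otherwise. -/
noncomputable def klDiv {Ω : Type*} [MeasurableSpace Ω] (μ P : Measure Ω) : EReal :=
  if μ ≪ P ∧ Integrable (llr μ P) μ then ((∫ x, llr μ P x ∂μ : ℝ) : EReal) else ⊤

/-!
A uniform bound `KL(μₖ ‖ P) ≤ B` makes the `μₖ` uniformly absolutely continuous with respect to
`P`: integrating `c x ≤ c e^{c+1} + (x log x + 1 - x)` against `P` over `A`, with `x = dμₖ/dP`,
gives `c μₖ(A) ≤ c e^{c+1} P(A) + B`. By the portmanteau theorem the limit `μ` inherits the same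
smallness on open sets.

Approximate `f` in `L¹(P)` by a bounded continuous `g` with the same sup bound. The set where
`|f - g| ≥ δ` has small `P`-measure, hence lies in an open set `U` of small `P`-measure, and then
`|∫ f - ∫ g| ≤ δ + 2C ν(U)` is small simultaneously for `ν = μₖ` and `ν = μ`. Weak convergence of
`∫ g dμₖ` finishes an `ε/3` argument.
-/

open Real InformationTheory in
lemma mul_le_mul_exp_add_klFun {c x : ℝ} (hc : 0 ≤ c) (hx : 0 ≤ x) :
    c * x ≤ c * exp (c + 1) + klFun x := by
  rcases le_or_gt x (exp (c + 1)) with hxM | hxM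
  · nlinarith [klFun_nonneg hx]
  · have hlog : c + 1 < log x := (lt_log_iff_exp_lt ((exp_pos _).trans hxM)).2 hxM
    rw [klFun_apply]
    nlinarith [exp_pos (c + 1)]

open Real ENNReal InformationTheory in
lemma ofReal_mul_measure_le_add_klDiv {Ω : Type*} [MeasurableSpace Ω] {ν P : Measure Ω}
    [IsFiniteMeasure ν] [IsFiniteMeasure P] (hνP : ν ≪ P) {c : ℝ} (hc : 0 ≤ c)
    {A : Set Ω} (hA : MeasurableSet A) :
    ENNReal.ofReal c * ν A ≤
      ENNReal.ofReal (c * exp (c + 1)) * P A + InformationTheory.klDiv ν P := by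
  have hpointwise : ∀ᵐ x ∂P, ENNReal.ofReal c * ν.rnDeriv P x ≤
      ENNReal.ofReal (c * exp (c + 1)) + ENNReal.ofReal (klFun (ν.rnDeriv P x).toReal) := by
    filter_upwards [Measure.rnDeriv_lt_top ν P] with x hx
    have h := ofReal_le_ofReal (mul_le_mul_exp_add_klFun hc (toReal_nonneg (a := ν.rnDeriv P x)))
    rwa [ofReal_add (by positivity) (klFun_nonneg toReal_nonneg), ofReal_mul hc,
      ofReal_toReal hx.ne] at h
  calc ENNReal.ofReal c * ν A
      = ∫⁻ x in A, ENNReal.ofReal c * ν.rnDeriv P x ∂P := by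
        rw [lintegral_const_mul _ (Measure.measurable_rnDeriv ν P),
          Measure.setLIntegral_rnDeriv' hνP hA]
    _ ≤ ∫⁻ x in A, ENNReal.ofReal (c * exp (c + 1)) +
          ENNReal.ofReal (klFun (ν.rnDeriv P x).toReal) ∂P :=
        setLIntegral_mono_ae (by fun_prop) (hpointwise.mono fun x hx _ => hx)
    _ ≤ ENNReal.ofReal (c * exp (c + 1)) * P A +
          ∫⁻ x, ENNReal.ofReal (klFun (ν.rnDeriv P x).toReal) ∂P := by
        rw [lintegral_add_left measurable_const, setLIntegral_const]
        exact add_le_add_right (setLIntegral_le_lintegral _ _) _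
    _ = _ := by rw [klDiv_eq_lintegral_klFun_of_ac hνP]

lemma klDiv_eq_coe_klDiv {Ω : Type*} [MeasurableSpace Ω] {ν P : Measure Ω}
    [IsProbabilityMeasure ν] [IsProbabilityMeasure P] :
    klDiv ν P = (InformationTheory.klDiv ν P : EReal) := by
  unfold klDiv
  split_ifs with h
  · have hnonneg := InformationTheory.integral_llr_add_sub_measure_univ_nonneg h.1 h.2
    simp only [probReal_univ, add_sub_cancel_right] at hnonneg
    rw [InformationTheory.klDiv_of_ac_of_integrable h.1 h.2, EReal.coe_ennreal_ofReal]
    simp [hnonneg]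
  · rw [InformationTheory.klDiv_eq_top_iff.2 fun hac hint => h ⟨hac, hint⟩]
    rfl

open Real ENNReal in
lemma exists_pos_forall_measure_le_of_klDiv_le {Ω : Type*} [MeasurableSpace Ω]
    (P : Measure Ω) [IsProbabilityMeasure P] (B : ℝ) {η : ℝ} (hη : 0 < η) :
    ∃ θ > 0, ∀ (ν : Measure Ω) [IsProbabilityMeasure ν], klDiv ν P ≤ (B : EReal) →
      ∀ A, MeasurableSet A → P A ≤ ENNReal.ofReal θ → ν A ≤ ENNReal.ofReal η := by
  set c := 2 * (|B| + 1) / η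
  have hc : 0 < c := by positivity
  refine ⟨η / (2 * exp (c + 1)), by positivity, fun ν _ hB A hA hPA => ?_⟩
  have hK : InformationTheory.klDiv ν P ≤ ENNReal.ofReal B := by
    simpa [klDiv_eq_coe_klDiv, EReal.toENNReal_coe] using EReal.toENNReal_le_toENNReal hB
  have hνP : ν ≪ P :=
    (InformationTheory.klDiv_ne_top_iff.1 (ne_top_of_le_ne_top ofReal_ne_top hK)).1
  refine (ENNReal.mul_le_mul_iff_right (ofReal_pos.2 hc).ne' ofReal_ne_top).1 ?_
  calc ENNReal.ofReal c * ν A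
      ≤ ENNReal.ofReal (c * exp (c + 1)) * P A + InformationTheory.klDiv ν P :=
        ofReal_mul_measure_le_add_klDiv hνP hc.le hA
    _ ≤ ENNReal.ofReal (c * exp (c + 1)) * ENNReal.ofReal (η / (2 * exp (c + 1))) +
          ENNReal.ofReal (|B| + 1) := by
        gcongr
        exact hK.trans (ofReal_le_ofReal ((le_abs_self B).trans (lt_add_one _).le))
    _ = ENNReal.ofReal c * ENNReal.ofReal η := by
        rw [← ofReal_mul (by positivity), ← ofReal_add (by positivity) (by positivity),
          ← ofReal_mul hc.le]
        have hcη : c * η = 2 * (|B| + 1) := by simp only [c]; field_simp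
        congr 1
        field_simp
        linarith

lemma ProbabilityMeasure.measure_le_of_tendsto_of_isOpen {Ω ι : Type*} {L : Filter ι} [L.NeBot]
    [MeasurableSpace Ω] [TopologicalSpace Ω] [OpensMeasurableSpace Ω] [HasOuterApproxClosed Ω]
    {μ : ProbabilityMeasure Ω} {μs : ι → ProbabilityMeasure Ω} (hμs : Tendsto μs L (𝓝 μ))
    {G : Set Ω} (hG : IsOpen G) {r : ENNReal} (hr : ∀ i, (μs i : Measure Ω) G ≤ r) :
    (μ : Measure Ω) G ≤ r :=
  calc (μ : Measure Ω) G ≤ L.liminf fun i => (μs i : Measure Ω) G :=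
        ProbabilityMeasure.le_liminf_measure_open_of_tendsto hμs hG
    _ ≤ L.liminf fun _ => r := liminf_le_liminf (.of_forall hr)
    _ = r := liminf_const r

lemma Measurable.integrable_of_abs_le {Ω : Type*} [MeasurableSpace Ω] {f : Ω → ℝ}
    (hf : Measurable f) {C : ℝ} (hC : ∀ x, |f x| ≤ C) (m : Measure Ω) [IsFiniteMeasure m] :
    Integrable f m :=
  .of_bound hf.aestronglyMeasurable C (ae_of_all _ fun x => (Real.norm_eq_abs _).trans_le (hC x))

lemma abs_sub_max_min_le {C u t : ℝ} (hu : |u| ≤ C) : |u - max (-C) (min C t)| ≤ |u - t| := by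
  have hlip : LipschitzWith 1 (fun t : ℝ => max (-C) (min C t)) :=
    (LipschitzWith.id.const_min C).const_max (-C)
  have hfix : max (-C) (min C u) = u := by
    rw [abs_le] at hu
    rw [min_eq_right hu.2, max_eq_right hu.1]
  simpa [Real.dist_eq, hfix] using hlip.dist_le_mul u t

lemma exists_boundedContinuous_abs_le_integral_abs_sub_le {S : Type*} [TopologicalSpace S]
    [NormalSpace S] [MeasurableSpace S] [BorelSpace S] (P : Measure S) [IsFiniteMeasure P]
    [P.WeaklyRegular] {f : S → ℝ} (hf : Measurable f) {C : ℝ} (hC : ∀ x, |f x| ≤ C)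
    {ε : ℝ} (hε : 0 < ε) :
    ∃ g : S →ᵇ ℝ, (∀ x, |g x| ≤ C) ∧ ∫ x, |f x - g x| ∂P ≤ ε := by
  have hfint := hf.integrable_of_abs_le hC P
  obtain ⟨g₀, hg₀, hg₀int⟩ := hfint.exists_boundedContinuous_integral_sub_le hε
  let g : S →ᵇ ℝ := .comp _ ((LipschitzWith.id.const_min C).const_max (-C)) g₀
  refine ⟨g, fun x => abs_le.2 ⟨le_max_left _ _, max_le ?_ (min_le_left _ _)⟩, ?_⟩
  · linarith [(abs_nonneg _).trans (hC x)]
  · calc ∫ x, |f x - g x| ∂P ≤ ∫ x, ‖f x - g₀ x‖ ∂P :=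
          integral_mono ((hfint.sub (g.integrable P)).abs) (hfint.sub hg₀int).norm
            fun x => abs_sub_max_min_le (hC x)
      _ ≤ ε := hg₀

lemma abs_integral_sub_le_of_abs_sub_le_add_indicator {Ω : Type*} [MeasurableSpace Ω]
    {m : Measure Ω} [IsProbabilityMeasure m] {f g : Ω → ℝ} (hf : Integrable f m)
    (hg : Integrable g m) {U : Set Ω} (hU : MeasurableSet U) {δ D : ℝ}
    (hfg : ∀ x, |f x - g x| ≤ δ + U.indicator (fun _ => D) x) :
    |∫ x, f x ∂m - ∫ x, g x ∂m| ≤ δ + D * m.real U := by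
  have hind : Integrable (U.indicator fun _ => D) m := (integrable_const D).indicator hU
  calc |∫ x, f x ∂m - ∫ x, g x ∂m| = |∫ x, (f x - g x) ∂m| := by rw [integral_sub hf hg]
    _ ≤ ∫ x, |f x - g x| ∂m := abs_integral_le_integral_abs
    _ ≤ ∫ x, (δ + U.indicator (fun _ => D) x) ∂m :=
        integral_mono (hf.sub hg).abs ((integrable_const δ).add hind) hfg
    _ = δ + D * m.real U := by
        rw [integral_add (integrable_const δ) hind, integral_indicator_const D hU]
        simp [mul_comm]

lemma exists_boundedContinuous_isOpen_abs_integral_sub_le {S : Type*} [TopologicalSpace S]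
    [TopologicalSpace.PseudoMetrizableSpace S] [MeasurableSpace S] [BorelSpace S]
    (P : Measure S) [IsFiniteMeasure P] {f : S → ℝ} (hf : Measurable f) {C : ℝ}
    (hC : ∀ x, |f x| ≤ C) {δ θ : ℝ} (hδ : 0 < δ) (hθ : 0 < θ) :
    ∃ g : S →ᵇ ℝ, ∃ U : Set S, IsOpen U ∧ P U ≤ ENNReal.ofReal θ ∧
      ∀ (m : Measure S) [IsProbabilityMeasure m],
        |∫ x, f x ∂m - ∫ x, g x ∂m| ≤ δ + 2 * C * m.real U := by
  obtain ⟨g, hgC, hfg⟩ :=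
    exists_boundedContinuous_abs_le_integral_abs_sub_le P hf hC (mul_pos hδ (half_pos hθ))
  set A := {x | δ ≤ |f x - g x|}
  have hA : MeasurableSet A :=
    measurableSet_le measurable_const (hf.sub g.continuous.measurable).abs
  have hfint := hf.integrable_of_abs_le hC
  have hPA : P A ≤ ENNReal.ofReal (θ / 2) := by
    have h := mul_meas_ge_le_integral_of_nonneg (ae_of_all P fun x => abs_nonneg (f x - g x))
      ((hfint P).sub (g.integrable P)).abs δ
    rw [← ofReal_measureReal]
    exact ENNReal.ofReal_le_ofReal (le_of_mul_le_mul_left (by linarith) hδ)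
  obtain ⟨U, hAU, hU, hPU⟩ := A.exists_isOpen_lt_of_lt _
    (ENNReal.lt_add_right (measure_ne_top P A) (ENNReal.ofReal_pos.2 (half_pos hθ)).ne')
  refine ⟨g, U, hU, ?_, fun m _ => ?_⟩
  · refine hPU.le.trans ((add_le_add_left hPA _).trans ?_)
    rw [← ENNReal.ofReal_add (half_pos hθ).le (half_pos hθ).le, add_halves]
  refine abs_integral_sub_le_of_abs_sub_le_add_indicator (hfint m) (g.integrable m)
    hU.measurableSet fun x => ?_
  by_cases hx : x ∈ U
  · rw [Set.indicator_of_mem hx]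
    linarith [abs_sub (f x) (g x), hC x, hgC x]
  · rw [Set.indicator_of_notMem hx]
    have : |f x - g x| < δ := not_le.1 fun h => hx (hAU h)
    linarith

lemma tendsto_of_forall_dist_le_of_tendsto {α ι : Type*} [PseudoMetricSpace α] {L : Filter ι}
    {F : ι → α} {a : α}
    (h : ∀ ε > 0, ∃ G : ι → α, ∃ b : α, Tendsto G L (𝓝 b) ∧ (∀ i, dist (F i) (G i) ≤ ε) ∧
      dist b a ≤ ε) :
    Tendsto F L (𝓝 a) := by
  refine Metric.tendsto_nhds.2 fun ε hε => ?_
  obtain ⟨G, b, hG, hFG, hb⟩ := h (ε / 3) (by positivity)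
  filter_upwards [Metric.tendsto_nhds.1 hG (ε / 3) (by positivity)] with i hi
  calc dist (F i) a ≤ dist (F i) (G i) + dist (G i) b + dist b a := dist_triangle4 _ _ _ _
    _ < ε := by linarith [hFG i]

theorem integral_tendsto_of_weak_conv_of_bounded_klDiv
    {S : Type*} [TopologicalSpace S] [PolishSpace S] [MeasurableSpace S] [BorelSpace S]
    (P : Measure S) [IsProbabilityMeasure P]
    (μ : ℕ → Measure S) (hμ : ∀ k, IsProbabilityMeasure (μ k))
    (μlim : Measure S) [IsProbabilityMeasure μlim]
    (hKL : ∃ B : ℝ, ∀ k, klDiv (μ k) P ≤ (B : EReal))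
    (hweak : ∀ g : S →ᵇ ℝ,
      Tendsto (fun k => ∫ x, g x ∂(μ k)) atTop (𝓝 (∫ x, g x ∂μlim)))
    (f : S → ℝ) (hf : Measurable f) (hfbd : ∃ C : ℝ, ∀ x, |f x| ≤ C) :
    Tendsto (fun k => ∫ x, f x ∂(μ k)) atTop (𝓝 (∫ x, f x ∂μlim)) := by
  let := TopologicalSpace.upgradeIsCompletelyMetrizable S
  obtain ⟨B, hB⟩ := hKL
  obtain ⟨C, hC⟩ := hfbd
  have hconv : Tendsto (β := ProbabilityMeasure S) (fun k => ⟨μ k, hμ k⟩) atTop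
      (𝓝 ⟨μlim, inferInstance⟩) :=
    ProbabilityMeasure.tendsto_iff_forall_integral_tendsto.2 hweak
  refine tendsto_of_forall_dist_le_of_tendsto fun ε hε => ?_
  set η := ε / (4 * (|C| + 1))
  have hη : 0 < η := by positivity
  obtain ⟨θ, hθ, hsmall⟩ := exists_pos_forall_measure_le_of_klDiv_le P B hη
  obtain ⟨g, U, hU, hPU, happrox⟩ :=
    exists_boundedContinuous_isOpen_abs_integral_sub_le P hf hC (half_pos hε) hθ
  have hμU (k : ℕ) : μ k U ≤ ENNReal.ofReal η := hsmall (μ k) (hB k) U hU.measurableSet hPU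
  have hμlimU : μlim U ≤ ENNReal.ofReal η :=
    ProbabilityMeasure.measure_le_of_tendsto_of_isOpen hconv hU hμU
  have hclose (m : Measure S) [IsProbabilityMeasure m] (hm : m U ≤ ENNReal.ofReal η) :
      dist (∫ x, f x ∂m) (∫ x, g x ∂m) ≤ ε := by
    have hmU : m.real U ≤ η := ENNReal.toReal_le_of_le_ofReal hη.le hm
    have hCη : (|C| + 1) * η = ε / 4 := by simp only [η]; field_simp
    rw [Real.dist_eq]
    refine (happrox m).trans ?_
    nlinarith [le_abs_self C, abs_nonneg C, measureReal_nonneg (μ := m) (s := U)]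
  refine ⟨fun k => ∫ x, g x ∂μ k, ∫ x, g x ∂μlim, hweak g, fun k => hclose (μ k) (hμU k), ?_⟩
  rw [dist_comm]
  exact hclose μlim hμlimU
end

section
/- Let S be a Polish space equipped with its Borel σ-algebra, let P be a Borel probability measure on S, and let (μ_k) be a sequence of Borel probability measures on S such that sup_k KL(μ_k ‖ P) < ∞ and such that (μ_k) converges weakly to a Borel probability measure μ. Let (f_k) be a sequence of Borel measurable functions f_k : S → ℝ that is uniformly bounded (there exists C with |f_k(x)| ≤ C for all k and x) and converges P-almost everywhere to a Borel measurable function f. Then ∫_S f_k dμ_k → ∫_S f dμ as k → ∞. -/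
/-!
By the Donsker–Varadhan inequality `∫ g dν ≤ KL(ν ‖ P) + log ∫ exp g dP`, applied to `t • 1_A`,
a bound `KL(μ_k ‖ P) ≤ B` gives `t μ_k(A) ≤ B + (exp t - 1) P(A)`, so the `μ_k` are uniformly
absolutely continuous with respect to `P`. By outer regularity of `P` and the portmanteau theorem
for open sets, this persists when the weak limit `μ` is added to the family. Uniform absolute
continuity turns smallness in `P`-measure of uniformly bounded functions into smallness of their
integrals, uniformly over the family. Hence `∫ |f_k - f| dμ_k → 0`, because `f_k → f` in
`P`-measure, and `∫ f dμ_k → ∫ f dμ`, because `f` is `L¹(P)`-close to a bounded continuous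
function truncated at the bound of `f`, for which this is weak convergence.
-/

open MeasureTheory Filter Topology BoundedContinuousFunction Classical

open Real Set

section Measurable

variable {S : Type*} [MeasurableSpace S] {P ν : Measure S}

theorem klDiv_le_coe_iff {B : ℝ} :
    klDiv ν P ≤ B ↔ ν ≪ P ∧ Integrable (llr ν P) ν ∧ ∫ x, llr ν P x ∂ν ≤ B := by
  unfold klDiv
  split_ifs with h
  · simp [h]
  · simp only [top_le_iff, EReal.coe_ne_top, false_iff]
    tauto

theorem integral_le_integral_llr_add_log_integral_exp [IsProbabilityMeasure ν]
    [IsProbabilityMeasure P] (hνP : ν ≪ P) (hllr : Integrable (llr ν P) ν) {g : S → ℝ}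
    (hgν : Integrable g ν) (hgP : Integrable (fun x ↦ exp (g x)) P) :
    ∫ x, g x ∂ν ≤ ∫ x, llr ν P x ∂ν + log (∫ x, exp (g x) ∂P) := by
  have := isProbabilityMeasure_tilted hgP
  have hGibbs := InformationTheory.integral_llr_add_sub_measure_univ_nonneg
    (hνP.trans (absolutelyContinuous_tilted hgP)) (integrable_llr_tilted_right hνP hgν hllr hgP)
  rw [integral_llr_tilted_right hνP hgν hgP hllr] at hGibbs
  simp only [probReal_univ] at hGibbs
  linarith

theorem mul_measureReal_le_integral_llr_add [IsProbabilityMeasure ν] [IsProbabilityMeasure P]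
    (hνP : ν ≪ P) (hllr : Integrable (llr ν P) ν) {A : Set S} (hA : MeasurableSet A) (t : ℝ) :
    t * ν.real A ≤ ∫ x, llr ν P x ∂ν + (exp t - 1) * P.real A := by
  have hexp : (fun x ↦ exp (A.indicator (fun _ ↦ t) x))
      = fun x ↦ A.indicator (fun _ ↦ exp t - 1) x + 1 := by
    ext x
    by_cases hx : x ∈ A <;> simp [hx]
  have hexpP : Integrable (fun x ↦ A.indicator (fun _ ↦ exp t - 1) x + 1) P :=
    ((integrable_const _).indicator hA).add (integrable_const 1)
  have hexpP' : Integrable (fun x ↦ exp (A.indicator (fun _ ↦ t) x)) P := hexp ▸ hexpP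
  have hDV := integral_le_integral_llr_add_log_integral_exp hνP hllr
    ((integrable_const t).indicator hA) hexpP'
  have hlog := log_le_sub_one_of_pos (integral_exp_pos hexpP')
  rw [hexp, integral_add ((integrable_const _).indicator hA) (integrable_const 1),
    integral_indicator_const _ hA] at hDV hlog
  rw [integral_indicator_const _ hA] at hDV
  simp only [smul_eq_mul, integral_const, probReal_univ, one_mul] at hDV hlog
  linarith

def UniformlyAbsolutelyContinuous (𝓜 : Set (Measure S)) (P : Measure S) : Prop :=
  ∀ ε > 0, ∃ δ > 0, ∀ ν ∈ 𝓜, ∀ A, MeasurableSet A → P.real A < δ → ν.real A ≤ ε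

theorem uniformlyAbsolutelyContinuous_setOf_klDiv_le (P : Measure S) [IsProbabilityMeasure P]
    (B : ℝ) : UniformlyAbsolutelyContinuous {ν | IsProbabilityMeasure ν ∧ klDiv ν P ≤ B} P := by
  intro ε hε
  set t := 2 * (|B| + 1) / ε with ht
  have ht_pos : 0 < t := by positivity
  have hεt : ε * t = 2 * (|B| + 1) := by rw [ht]; field_simp
  have hexp : 0 < exp t - 1 := by linarith [add_one_lt_exp ht_pos.ne']
  refine ⟨(|B| + 1) / (exp t - 1), by positivity, fun ν ⟨hν, hνB⟩ A hA hPA ↦ ?_⟩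
  obtain ⟨hνP, hllr, hKL⟩ := klDiv_le_coe_iff.1 hνB
  have hbound := mul_measureReal_le_integral_llr_add hνP hllr hA t
  rw [lt_div_iff₀ hexp] at hPA
  have : t * ν.real A ≤ t * ε := by linarith [le_abs_self B]
  exact le_of_mul_le_mul_left this ht_pos

theorem UniformlyAbsolutelyContinuous.mono {𝓜 𝓜' : Set (Measure S)}
    (hU : UniformlyAbsolutelyContinuous 𝓜' P) (h : 𝓜 ⊆ 𝓜') : UniformlyAbsolutelyContinuous 𝓜 P :=
  fun ε hε ↦ (hU ε hε).imp fun _ ⟨hδ, hν⟩ ↦ ⟨hδ, fun ν h𝓜 ↦ hν ν (h h𝓜)⟩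

theorem UniformlyAbsolutelyContinuous.absolutelyContinuous {𝓜 : Set (Measure S)}
    (hU : UniformlyAbsolutelyContinuous 𝓜 P) [IsFiniteMeasure ν] (hν : ν ∈ 𝓜) : ν ≪ P := by
  refine Measure.AbsolutelyContinuous.mk fun A hA hPA ↦ ?_
  have : ν.real A ≤ 0 := le_of_forall_pos_le_add fun ε hε ↦ by
    obtain ⟨δ, hδ, h⟩ := hU ε hε
    simpa using h ν hν A hA (by simpa [measureReal_def, hPA] using hδ)
  exact (measureReal_eq_zero_iff).1 (le_antisymm this measureReal_nonneg)

theorem integral_abs_le_add_mul_measureReal [IsProbabilityMeasure ν] {h : S → ℝ}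
    (hh : Measurable h) {η M : ℝ} (hη : 0 ≤ η) (hM : ∀ᵐ x ∂ν, |h x| ≤ M) :
    ∫ x, |h x| ∂ν ≤ η + M * ν.real {x | η ≤ |h x|} := by
  set A := {x | η ≤ |h x|}
  have hA : MeasurableSet A := measurableSet_le measurable_const hh.abs
  have hle : ∀ᵐ x ∂ν, |h x| ≤ η + A.indicator (fun _ ↦ M) x := by
    filter_upwards [hM] with x hx
    by_cases hxA : x ∈ A
    · simp only [indicator_of_mem hxA]
      linarith
    · simp only [indicator_of_notMem hxA, add_zero]
      exact (not_le.1 hxA).le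
  calc ∫ x, |h x| ∂ν ≤ ∫ x, (η + A.indicator (fun _ ↦ M) x) ∂ν :=
        integral_mono_of_nonneg (ae_of_all _ fun x ↦ abs_nonneg _)
          ((integrable_const η).add ((integrable_const M).indicator hA)) hle
    _ = η + M * ν.real A := by
        rw [integral_add (integrable_const η) ((integrable_const M).indicator hA),
          integral_indicator_const _ hA]
        simp [mul_comm]

theorem UniformlyAbsolutelyContinuous.exists_integral_abs_lt {𝓜 : Set (Measure S)}
    (hU : UniformlyAbsolutelyContinuous 𝓜 P) (M : ℝ) {ε : ℝ} (hε : 0 < ε) :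
    ∃ δ > 0, ∀ ν ∈ 𝓜, IsProbabilityMeasure ν → ∀ h : S → ℝ, Measurable h →
      (∀ᵐ x ∂ν, |h x| ≤ M) → P.real {x | ε / 2 ≤ |h x|} < δ → ∫ x, |h x| ∂ν < ε := by
  obtain ⟨δ, hδ, hUδ⟩ := hU (ε / (2 * (|M| + 1))) (by positivity)
  refine ⟨δ, hδ, fun ν hν _ h hh hM hPh ↦ ?_⟩
  have hνh := hUδ ν hν _ (measurableSet_le measurable_const hh.abs) hPh
  have hM' : M * ν.real {x | ε / 2 ≤ |h x|} ≤ |M| * (ε / (2 * (|M| + 1))) :=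
    mul_le_mul (le_abs_self M) hνh measureReal_nonneg (abs_nonneg M)
  have : |M| * (ε / (2 * (|M| + 1))) < ε / 2 := by
    rw [mul_div_assoc', div_lt_div_iff₀ (by positivity) two_pos]
    nlinarith [abs_nonneg M]
  linarith [integral_abs_le_add_mul_measureReal hh (by positivity : 0 ≤ ε / 2) hM]

theorem UniformlyAbsolutelyContinuous.tendsto_integral_abs_sub {𝓜 : Set (Measure S)}
    [IsFiniteMeasure P] (hU : UniformlyAbsolutelyContinuous 𝓜 P) {ι : Type*} {l : Filter ι}
    {ν : ι → Measure S} (hν𝓜 : ∀ i, ν i ∈ 𝓜) (hν : ∀ i, IsProbabilityMeasure (ν i))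
    {f : ι → S → ℝ} {g : S → ℝ} (hf : ∀ i, Measurable (f i)) (hg : Measurable g) {M : ℝ}
    (hM : ∀ i, ∀ᵐ x ∂(ν i), |f i x - g x| ≤ M) (hfg : TendstoInMeasure P f l g) :
    Tendsto (fun i ↦ ∫ x, |f i x - g x| ∂(ν i)) l (𝓝 0) := by
  rw [tendstoInMeasure_iff_measureReal_dist] at hfg
  refine Metric.tendsto_nhds.2 fun ε hε ↦ ?_
  obtain ⟨δ, hδ, hint⟩ := hU.exists_integral_abs_lt M hε
  filter_upwards [(hfg (ε / 2) (by positivity)).eventually (gt_mem_nhds hδ)] with i hi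
  rw [Real.dist_0_eq_abs, abs_of_nonneg (integral_nonneg fun _ ↦ abs_nonneg _)]
  exact hint (ν i) (hν𝓜 i) (hν i) _ ((hf i).sub hg) (hM i) (by simpa [Real.dist_eq] using hi)

end Measurable

section Topological

variable {S : Type*} [TopologicalSpace S] [MeasurableSpace S] {P : Measure S}

theorem UniformlyAbsolutelyContinuous.insert_of_tendsto [OpensMeasurableSpace S]
    [HasOuterApproxClosed S] [IsFiniteMeasure P] [P.OuterRegular]
    {ι : Type*} {l : Filter ι} [l.NeBot]
    {μ : ι → Measure S} (hμ : ∀ i, IsProbabilityMeasure (μ i))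
    {μlim : Measure S} [IsProbabilityMeasure μlim]
    (hweak : ∀ g : S →ᵇ ℝ, Tendsto (fun i ↦ ∫ x, g x ∂(μ i)) l (𝓝 (∫ x, g x ∂μlim)))
    (hU : UniformlyAbsolutelyContinuous (range μ) P) :
    UniformlyAbsolutelyContinuous (insert μlim (range μ)) P := by
  have hlim : Tendsto (β := ProbabilityMeasure S) (fun i ↦ ⟨μ i, hμ i⟩) l
      (𝓝 (⟨μlim, inferInstance⟩ : ProbabilityMeasure S)) :=
    ProbabilityMeasure.tendsto_iff_forall_integral_tendsto.2 hweak
  have := hμ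
  intro ε hε
  obtain ⟨δ, hδ, hUδ⟩ := hU ε hε
  refine ⟨δ, hδ, ?_⟩
  rintro ν (rfl | hν) A hA hPA
  · rw [measureReal_def, ← ENNReal.lt_ofReal_iff_toReal_lt (measure_ne_top _ _)] at hPA
    obtain ⟨U, hAU, hU_open, hPU⟩ := A.exists_isOpen_lt_of_lt _ hPA
    have hμU : ∀ i, μ i U ≤ ENNReal.ofReal ε := fun i ↦ by
      rw [ENNReal.le_ofReal_iff_toReal_le (measure_ne_top _ _) hε.le]
      exact hUδ _ ⟨i, rfl⟩ U hU_open.measurableSet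
        ((ENNReal.lt_ofReal_iff_toReal_lt (measure_ne_top _ _)).1 hPU)
    have hνU : ν U ≤ ENNReal.ofReal ε :=
      (ProbabilityMeasure.le_liminf_measure_open_of_tendsto hlim hU_open).trans
        (liminf_le_of_frequently_le' (Frequently.of_forall hμU))
    exact ENNReal.toReal_le_of_le_ofReal hε.le ((measure_mono hAU).trans hνU)
  · exact hUδ ν hν A hA hPA

theorem exists_boundedContinuous_integral_abs_sub_le [NormalSpace S] [BorelSpace S]
    [IsFiniteMeasure P] [P.WeaklyRegular] {φ : S → ℝ} (hφ : Measurable φ) {C : ℝ}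
    (hφC : ∀ᵐ x ∂P, |φ x| ≤ C) {η : ℝ} (hη : 0 < η) :
    ∃ g : S →ᵇ ℝ, (∀ᵐ x ∂P, |φ x - g x| ≤ 2 * C) ∧ ∫ x, |φ x - g x| ∂P ≤ η := by
  have hφP : Integrable φ P :=
    .of_bound hφ.aestronglyMeasurable C (by simpa only [Real.norm_eq_abs] using hφC)
  obtain ⟨g₀, hg₀, hg₀P⟩ := hφP.exists_boundedContinuous_integral_sub_le hη
  set g := g₀ ⊓ const S C ⊔ const S (-C)
  have hg : ∀ x, g x = max (min (g₀ x) C) (-C) := fun x ↦ by simp [g]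
  have hclose : ∀ᵐ x ∂P, |φ x - g x| ≤ |φ x - g₀ x| ∧ |φ x - g x| ≤ 2 * C := by
    filter_upwards [hφC] with x hx
    obtain ⟨hx₁, hx₂⟩ := abs_le.1 hx
    have hφx : φ x = max (min (φ x) C) (-C) := by rw [min_eq_left hx₂, max_eq_left hx₁]
    refine ⟨?_, ?_⟩
    · calc |φ x - g x| = |max (min (φ x) C) (-C) - max (min (g₀ x) C) (-C)| := by rw [← hφx, hg]
        _ ≤ |min (φ x) C - min (g₀ x) C| := abs_max_sub_max_le_abs _ _ _
        _ ≤ |φ x - g₀ x| := by simpa using abs_min_sub_min_le_max (φ x) C (g₀ x) C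
    · have hgC : -C ≤ g x ∧ g x ≤ C := by
        rw [hg]
        exact ⟨le_max_right _ _, max_le (min_le_right _ _) (by linarith)⟩
      exact abs_le.2 ⟨by linarith, by linarith⟩
  refine ⟨g, hclose.mono fun x hx ↦ hx.2, ?_⟩
  have hint : Integrable (fun x ↦ |φ x - g₀ x|) P := (hφP.sub hg₀P).abs
  exact (integral_mono_of_nonneg (ae_of_all _ fun x ↦ abs_nonneg _) hint
    (hclose.mono fun x hx ↦ hx.1)).trans (by simpa only [Real.norm_eq_abs] using hg₀)

theorem UniformlyAbsolutelyContinuous.exists_boundedContinuous_dist_integral_le [NormalSpace S]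
    [BorelSpace S] [IsFiniteMeasure P] [P.WeaklyRegular] {𝓜 : Set (Measure S)}
    (hU : UniformlyAbsolutelyContinuous 𝓜 P) (h𝓜 : ∀ ν ∈ 𝓜, IsProbabilityMeasure ν)
    {φ : S → ℝ} (hφ : Measurable φ) {C : ℝ} (hφC : ∀ᵐ x ∂P, |φ x| ≤ C) {ε : ℝ} (hε : 0 < ε) :
    ∃ g : S →ᵇ ℝ, ∀ ν ∈ 𝓜, dist (∫ x, φ x ∂ν) (∫ x, g x ∂ν) ≤ ε := by
  obtain ⟨δ, hδ, hint⟩ := hU.exists_integral_abs_lt (2 * C) hε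
  obtain ⟨g, hgC, hgP⟩ :=
    exists_boundedContinuous_integral_abs_sub_le hφ hφC (η := ε / 2 * δ / 2) (by positivity)
  refine ⟨g, fun ν hν ↦ ?_⟩
  have := h𝓜 ν hν
  have hνP := hU.absolutelyContinuous hν
  have hMarkov : P.real {x | ε / 2 ≤ |φ x - g x|} < δ := by
    have := mul_meas_ge_le_integral_of_nonneg (ae_of_all _ fun x ↦ abs_nonneg (φ x - g x))
      (.of_bound (hφ.sub g.continuous.measurable).abs.aestronglyMeasurable _
        (by simpa only [Real.norm_eq_abs, abs_abs] using hgC)) (ε / 2)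
    nlinarith
  have hφν : Integrable φ ν :=
    .of_bound hφ.aestronglyMeasurable C (hνP.ae_le hφC)
  rw [Real.dist_eq, ← integral_sub hφν (g.integrable ν)]
  exact abs_integral_le_integral_abs.trans
    (hint ν hν this _ (hφ.sub g.continuous.measurable) (hνP.ae_le hgC) hMarkov).le

theorem UniformlyAbsolutelyContinuous.tendsto_integral [NormalSpace S] [BorelSpace S]
    [IsFiniteMeasure P] [P.WeaklyRegular] {ι : Type*} {l : Filter ι} {μ : ι → Measure S}
    (hμ : ∀ i, IsProbabilityMeasure (μ i)) {μlim : Measure S} [IsProbabilityMeasure μlim]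
    (hweak : ∀ g : S →ᵇ ℝ, Tendsto (fun i ↦ ∫ x, g x ∂(μ i)) l (𝓝 (∫ x, g x ∂μlim)))
    (hU : UniformlyAbsolutelyContinuous (insert μlim (range μ)) P)
    {φ : S → ℝ} (hφ : Measurable φ) {C : ℝ} (hφC : ∀ᵐ x ∂P, |φ x| ≤ C) :
    Tendsto (fun i ↦ ∫ x, φ x ∂(μ i)) l (𝓝 (∫ x, φ x ∂μlim)) := by
  refine Metric.tendsto_nhds.2 fun ε hε ↦ ?_
  have hprob : ∀ ν ∈ insert μlim (range μ), IsProbabilityMeasure ν := by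
    rintro ν (rfl | ⟨i, rfl⟩)
    exacts [inferInstance, hμ i]
  obtain ⟨g, hg⟩ :=
    hU.exists_boundedContinuous_dist_integral_le hprob hφ hφC (ε := ε / 3) (by positivity)
  filter_upwards [Metric.tendsto_nhds.1 (hweak g) (ε / 3) (by positivity)] with i hi
  have hμi := hg (μ i) (mem_insert_of_mem _ ⟨i, rfl⟩)
  have hμlim := dist_comm (∫ x, φ x ∂μlim) _ ▸ hg μlim (mem_insert _ _)
  linarith [dist_triangle4 (∫ x, φ x ∂(μ i)) (∫ x, g x ∂(μ i)) (∫ x, g x ∂μlim) (∫ x, φ x ∂μlim)]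

end Topological

theorem integral_tendsto_of_weak_conv_of_bounded_klDiv_ae
    {S : Type*} [TopologicalSpace S] [PolishSpace S] [MeasurableSpace S] [BorelSpace S]
    (P : Measure S) [IsProbabilityMeasure P]
    (μ : ℕ → Measure S) (hμ : ∀ k, IsProbabilityMeasure (μ k))
    (μlim : Measure S) [IsProbabilityMeasure μlim]
    (hKL : ∃ B : ℝ, ∀ k, klDiv (μ k) P ≤ (B : EReal))
    (hweak : ∀ g : S →ᵇ ℝ,
      Tendsto (fun k => ∫ x, g x ∂(μ k)) atTop (𝓝 (∫ x, g x ∂μlim)))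
    (f : ℕ → S → ℝ) (hfmeas : ∀ k, Measurable (f k))
    (C : ℝ) (hfbd : ∀ k x, |f k x| ≤ C)
    (flim : S → ℝ) (hflim : Measurable flim)
    (hae : ∀ᵐ x ∂P, Tendsto (fun k => f k x) atTop (𝓝 (flim x))) :
    Tendsto (fun k => ∫ x, f k x ∂(μ k)) atTop (𝓝 (∫ x, flim x ∂μlim)) := by
  obtain ⟨B, hB⟩ := hKL
  have hU : UniformlyAbsolutelyContinuous (range μ) P :=
    (uniformlyAbsolutelyContinuous_setOf_klDiv_le P B).mono
      (range_subset_iff.2 fun k ↦ ⟨hμ k, hB k⟩)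
  have hflimC : ∀ᵐ x ∂P, |flim x| ≤ C := by
    filter_upwards [hae] with x hx using le_of_tendsto' hx.abs fun k ↦ hfbd k x
  have hac : ∀ k, μ k ≪ P := fun k ↦ by
    have := hμ k; exact hU.absolutelyContinuous ⟨k, rfl⟩
  have hgapC : ∀ k, ∀ᵐ x ∂(μ k), |f k x - flim x| ≤ 2 * C := fun k ↦ by
    refine (hac k).ae_le ?_
    filter_upwards [hflimC] with x hx using (abs_sub _ _).trans (by linarith [hfbd k x])
  have hgap : Tendsto (fun k ↦ ∫ x, |f k x - flim x| ∂(μ k)) atTop (𝓝 0) :=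
    hU.tendsto_integral_abs_sub (fun k ↦ ⟨k, rfl⟩) hμ hfmeas hflim hgapC
      (tendstoInMeasure_of_tendsto_ae (fun k ↦ (hfmeas k).aestronglyMeasurable) hae)
  have hlim : Tendsto (fun k ↦ ∫ x, flim x ∂(μ k)) atTop (𝓝 (∫ x, flim x ∂μlim)) :=
    (hU.insert_of_tendsto hμ hweak).tendsto_integral hμ hweak hflim hflimC
  have hdiff : Tendsto (fun k ↦ ∫ x, f k x ∂(μ k) - ∫ x, flim x ∂(μ k)) atTop (𝓝 0) := by
    refine squeeze_zero_norm (fun k ↦ ?_) hgap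
    have := hμ k
    rw [Real.norm_eq_abs, ← integral_sub
      (.of_bound (hfmeas k).aestronglyMeasurable C (ae_of_all _ (hfbd k)))
      (.of_bound hflim.aestronglyMeasurable C ((hac k).ae_le hflimC))]
    exact abs_integral_le_integral_abs
  simpa using hdiff.add hlim
end

section
/- Let P be a probability measure on a measurable space and let f be a bounded measurable real-valued function. Define Z = ∫ e^{−f} dP and let μ* be the probability measure with density dμ*/dP = e^{−f}/Z. Then μ* is absolutely continuous with respect to P, KL(μ* ‖ P) is finite, and KL(μ* ‖ P) + ∫ f dμ* = −log Z; in particular the infimum in the variational formula −log ∫ e^{−f} dP = inf_{μ ≪ P} ( KL(μ ‖ P) + ∫ f dμ ) is attained at μ*. -/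
open MeasureTheory Filter Topology BoundedContinuousFunction Classical

/-!
Gibbs' inequality applied to `μ` and the tilted measure `P.tilted g` gives, for every probability
measure `μ ≪ P` of finite relative entropy, `∫ g dμ - log ∫ exp g dP ≤ KL(μ ‖ P)`. For `μ = P.tilted g`
the log-likelihood ratio is `g - log ∫ exp g dP` almost everywhere, so equality holds.
-/

open Real

section

variable {Ω : Type*} [MeasurableSpace Ω] {μ P : Measure Ω}

lemma klDiv_of_ac_of_integrable (hμP : μ ≪ P) (hint : Integrable (llr μ P) μ) :
    klDiv μ P = ((∫ x, llr μ P x ∂μ : ℝ) : EReal) :=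
  if_pos ⟨hμP, hint⟩

lemma klDiv_lt_top_iff : klDiv μ P < ⊤ ↔ μ ≪ P ∧ Integrable (llr μ P) μ := by
  unfold klDiv
  split_ifs with h
  · exact ⟨fun _ ↦ h, fun _ ↦ EReal.coe_lt_top _⟩
  · exact ⟨fun h' ↦ absurd h' (lt_irrefl _), fun h' ↦ absurd h' h⟩

lemma integral_llr_nonneg [IsProbabilityMeasure μ] [IsProbabilityMeasure P] (hμP : μ ≪ P)
    (hint : Integrable (llr μ P) μ) : 0 ≤ ∫ x, llr μ P x ∂μ := by
  simpa using InformationTheory.integral_llr_add_sub_measure_univ_nonneg hμP hint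

variable {g : Ω → ℝ}

lemma integral_sub_log_integral_exp_le_integral_llr [IsProbabilityMeasure μ] [SigmaFinite P]
    [NeZero P] (hμP : μ ≪ P) (hgμ : Integrable g μ) (hgP : Integrable (fun x ↦ exp (g x)) P)
    (hint : Integrable (llr μ P) μ) :
    ∫ x, g x ∂μ - log (∫ x, exp (g x) ∂P) ≤ ∫ x, llr μ P x ∂μ := by
  have := isProbabilityMeasure_tilted hgP
  have hgibbs := integral_llr_nonneg (hμP.trans (absolutelyContinuous_tilted hgP))
    (integrable_llr_tilted_right hμP hgμ hint hgP)
  rw [integral_llr_tilted_right hμP hgμ hgP hint] at hgibbs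
  linarith

lemma llr_tilted_self_ae_eq [SigmaFinite P] (hgP : Integrable (fun x ↦ exp (g x)) P) :
    llr (P.tilted g) P =ᵐ[P.tilted g] fun x ↦ g x - log (∫ x, exp (g x) ∂P) :=
  (tilted_absolutelyContinuous P g).ae_le (log_rnDeriv_tilted_left_self hgP)

lemma integrable_llr_tilted_self [SigmaFinite P] (hgP : Integrable (fun x ↦ exp (g x)) P)
    (hg : Integrable g (P.tilted g)) : Integrable (llr (P.tilted g) P) (P.tilted g) :=
  (integrable_congr (llr_tilted_self_ae_eq hgP)).2 (hg.sub (integrable_const _))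

lemma integral_llr_tilted_self [SigmaFinite P] [NeZero P]
    (hgP : Integrable (fun x ↦ exp (g x)) P) (hg : Integrable g (P.tilted g)) :
    ∫ x, llr (P.tilted g) P x ∂(P.tilted g) = ∫ x, g x ∂(P.tilted g) - log (∫ x, exp (g x) ∂P) := by
  have := isProbabilityMeasure_tilted hgP
  rw [integral_congr_ae (llr_tilted_self_ae_eq hgP), integral_sub hg (integrable_const _),
    integral_const, probReal_univ, one_smul]

end

theorem klDiv_tilted_attains_iInf
    {Ω : Type*} [MeasurableSpace Ω]
    (P : Measure Ω) [IsProbabilityMeasure P]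
    (f : Ω → ℝ) (hf : Measurable f) (C : ℝ) (hfbd : ∀ x, |f x| ≤ C)
    (Z : ℝ) (hZ : Z = ∫ x, Real.exp (-(f x)) ∂P)
    (μstar : Measure Ω)
    (hμstar : μstar = P.withDensity (fun x => ENNReal.ofReal (Real.exp (-(f x)) / Z))) :
    μstar ≪ P ∧ klDiv μstar P < ⊤ ∧
    klDiv μstar P + ((∫ x, f x ∂μstar : ℝ) : EReal) = ((- Real.log Z : ℝ) : EReal) ∧
    klDiv μstar P + ((∫ x, f x ∂μstar : ℝ) : EReal) =
      ⨅ (μ : Measure Ω) (_ : IsProbabilityMeasure μ) (_ : μ ≪ P) (_ : klDiv μ P < ⊤),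
        klDiv μ P + ((∫ x, f x ∂μ : ℝ) : EReal) := by
  have hfμ (μ : Measure Ω) [IsFiniteMeasure μ] : Integrable f μ :=
    .of_bound hf.aestronglyMeasurable C (ae_of_all _ hfbd)
  have hexp : Integrable (fun x ↦ exp (-f x)) P :=
    .of_bound (by fun_prop) (exp C) (ae_of_all _ fun x ↦ by
      simpa [neg_le] using (abs_le.1 (hfbd x)).1)
  obtain rfl : μstar = P.tilted (fun x ↦ -f x) := by rw [hμstar, Measure.tilted, hZ]
  subst hZ
  have hprob := isProbabilityMeasure_tilted hexp
  have hac := tilted_absolutelyContinuous P (fun x ↦ -f x)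
  have hint := integrable_llr_tilted_self hexp (hfμ _).neg
  have hvalue : klDiv (P.tilted fun x ↦ -f x) P + ((∫ x, f x ∂P.tilted fun x ↦ -f x : ℝ) : EReal)
      = ((-log (∫ x, exp (-f x) ∂P) : ℝ) : EReal) := by
    rw [klDiv_of_ac_of_integrable hac hint, integral_llr_tilted_self hexp (hfμ _).neg,
      integral_neg, ← EReal.coe_add]
    ring_nf
  refine ⟨hac, klDiv_lt_top_iff.2 ⟨hac, hint⟩, hvalue, le_antisymm ?_ ?_⟩
  · refine le_iInf fun μ ↦ le_iInf fun _ ↦ le_iInf fun _ ↦ le_iInf fun hlt ↦ ?_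
    obtain ⟨hμP, hμint⟩ := klDiv_lt_top_iff.1 hlt
    have hbound := integral_sub_log_integral_exp_le_integral_llr (g := fun x ↦ -f x) hμP
      (hfμ μ).neg hexp hμint
    rw [integral_neg] at hbound
    rw [hvalue, klDiv_of_ac_of_integrable hμP hμint, ← EReal.coe_add, EReal.coe_le_coe_iff]
    linarith
  · exact iInf_le_of_le _ (iInf_le_of_le hprob (iInf₂_le hac (klDiv_lt_top_iff.2 ⟨hac, hint⟩)))
end

section
/- Let m ≥ 1 and let γ be the standard Gaussian probability measure on ℝ^m (the m-fold product of the standard Gaussian measure on ℝ with mean 0 and variance 1). For every bounded measurable function f : ℝ^m → ℝ and every vector v ∈ ℝ^m, one has −log ∫_{ℝ^m} e^{−f(x)} dγ(x) ≤ (1/2)‖v‖² + ∫_{ℝ^m} f(x + v) dγ(x). -/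
/-!
Cameron–Martin: the standard Gaussian `γ` is the shifted Gaussian `γ(· - v)` reweighted by the
density `exp (-(v ⬝ᵥ y) + ‖v‖² / 2)`, so `∫ exp (-f) dγ = ∫ exp g dγ` with
`g x = -f (x + v) - v ⬝ᵥ x - ‖v‖² / 2`. Jensen's inequality for `exp` then gives
`log ∫ exp g dγ ≥ ∫ g dγ = -∫ f (x + v) dγ - ‖v‖² / 2`, the linear term having mean zero.
-/

open MeasureTheory ProbabilityTheory Real Matrix
open scoped ENNReal

theorem MeasureTheory.Measure.pi_withDensity {ι : Type*} [Fintype ι] {α : ι → Type*}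
    [∀ i, MeasurableSpace (α i)] {μ : ∀ i, Measure (α i)} [∀ i, IsProbabilityMeasure (μ i)]
    {f : ∀ i, α i → ℝ≥0∞} (hf : ∀ i, Measurable (f i))
    [∀ i, SigmaFinite ((μ i).withDensity (f i))] :
    Measure.pi (fun i => (μ i).withDensity (f i))
      = (Measure.pi μ).withDensity (fun x => ∏ i, f i (x i)) := by
  refine Measure.pi_eq fun s hs => ?_
  have hbox : MeasurableSet (Set.univ.pi s) := MeasurableSet.univ_pi hs
  have hind : (Set.univ.pi s).indicator (fun x => ∏ i, f i (x i))
      = fun x => ∏ i, (s i).indicator (f i) (x i) := by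
    ext x
    by_cases hx : x ∈ Set.univ.pi s
    · rw [Set.indicator_of_mem hx]
      exact Finset.prod_congr rfl fun i _ => (Set.indicator_of_mem (hx i trivial) _).symm
    · obtain ⟨i, -, hi⟩ := by simpa only [Set.mem_pi, not_forall] using hx
      rw [Set.indicator_of_notMem hx,
        Finset.prod_eq_zero (Finset.mem_univ i) (Set.indicator_of_notMem hi _)]
  have hmeas : ∀ i, Measurable ((s i).indicator (f i)) := fun i => (hf i).indicator (hs i)
  rw [withDensity_apply _ hbox, ← lintegral_indicator hbox, hind,
    lintegral_prod_eq_prod_lintegral_of_indepFun _ _ (iIndepFun_pi fun i => (hmeas i).aemeasurable)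
      fun i => (hmeas i).comp (measurable_pi_apply i)]
  refine Finset.prod_congr rfl fun i _ => ?_
  rw [withDensity_apply _ (hs i), ← lintegral_indicator (hs i),
    (measurePreserving_eval μ i).lintegral_comp (hmeas i)]

theorem integral_le_log_integral_exp {α : Type*} [MeasurableSpace α] {μ : Measure α}
    [IsProbabilityMeasure μ] {g : α → ℝ} (hg : Integrable g μ)
    (hexp : Integrable (fun x => exp (g x)) μ) :
    ∫ x, g x ∂μ ≤ log (∫ x, exp (g x) ∂μ) := by
  have jensen : exp (∫ x, g x ∂μ) ≤ ∫ x, exp (g x) ∂μ :=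
    convexOn_exp.map_integral_le continuousOn_exp isClosed_univ (ae_of_all _ fun _ => trivial)
      hg hexp
  rwa [le_log_iff_exp_le (lt_of_lt_of_le (exp_pos _) jensen)]

theorem gaussianReal_zero_one_eq_withDensity (a : ℝ) :
    gaussianReal 0 1 = (gaussianReal a 1).withDensity
      (fun x => ENNReal.ofReal (exp (-(a * x) + a ^ 2 / 2))) := by
  rw [gaussianReal_of_var_ne_zero 0 one_ne_zero, gaussianReal_of_var_ne_zero a one_ne_zero,
    ← withDensity_mul _ (measurable_gaussianPDF a 1) (by fun_prop)]
  congr 1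
  funext x
  rw [Pi.mul_apply, gaussianPDF, gaussianPDF, ← ENNReal.ofReal_mul (gaussianPDFReal_nonneg a 1 x)]
  simp only [gaussianPDFReal, NNReal.coe_one, mul_one, mul_assoc, ← exp_add]
  ring_nf

section StandardGaussian

variable {ι : Type*} [Fintype ι]

local notation "γ" => Measure.pi fun _ : ι => gaussianReal 0 1

theorem measurePreserving_add_const_pi_gaussianReal (v : ι → ℝ) :
    MeasurePreserving (· + v) γ (Measure.pi fun i => gaussianReal (v i) 1) :=
  measurePreserving_pi _ _ fun i =>
    ⟨measurable_add_const (v i), by rw [gaussianReal_map_add_const, zero_add]⟩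

theorem pi_gaussianReal_eq_withDensity (v : ι → ℝ) :
    γ = (Measure.pi fun i => gaussianReal (v i) 1).withDensity
      (fun x => ENNReal.ofReal (exp (-(v ⬝ᵥ x) + v ⬝ᵥ v / 2))) := by
  have hprod : ∀ x : ι → ℝ, ENNReal.ofReal (exp (-(v ⬝ᵥ x) + v ⬝ᵥ v / 2))
      = ∏ i, ENNReal.ofReal (exp (-(v i * x i) + v i ^ 2 / 2)) := by
    intro x
    rw [← ENNReal.ofReal_prod_of_nonneg fun i _ => (exp_pos _).le, ← exp_sum,
      Finset.sum_add_distrib, Finset.sum_neg_distrib, ← Finset.sum_div]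
    simp only [dotProduct, sq]
  calc γ = Measure.pi fun i => (gaussianReal (v i) 1).withDensity
          (fun y => ENNReal.ofReal (exp (-(v i * y) + v i ^ 2 / 2))) := by
        simp_rw [← gaussianReal_zero_one_eq_withDensity]
    _ = _ := by
        rw [Measure.pi_withDensity (by fun_prop)]
        simp_rw [hprod]

theorem lintegral_pi_gaussianReal_comp_add_const (v : ι → ℝ) {h : (ι → ℝ) → ℝ≥0∞}
    (hh : Measurable h) :
    ∫⁻ x, h x ∂γ = ∫⁻ x, ENNReal.ofReal (exp (-(v ⬝ᵥ x) - v ⬝ᵥ v / 2)) * h (x + v) ∂γ := by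
  set ρ : (ι → ℝ) → ℝ≥0∞ := fun x => ENNReal.ofReal (exp (-(v ⬝ᵥ x) + v ⬝ᵥ v / 2))
  calc ∫⁻ x, h x ∂γ = ∫⁻ y, ρ y * h y ∂(Measure.pi fun i => gaussianReal (v i) 1) := by
        conv_lhs => rw [pi_gaussianReal_eq_withDensity v]
        exact lintegral_withDensity_eq_lintegral_mul _ (by fun_prop) hh
    _ = ∫⁻ x, ρ (x + v) * h (x + v) ∂γ :=
        ((measurePreserving_add_const_pi_gaussianReal v).lintegral_comp (by fun_prop)).symm
    _ = _ := by
        refine lintegral_congr fun x => ?_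
        simp only [ρ, dotProduct_add]
        ring_nf

theorem integrable_dotProduct_pi_gaussianReal (v : ι → ℝ) :
    Integrable (fun x => v ⬝ᵥ x) γ :=
  integrable_finsetSum _ fun i _ =>
    (integrable_eval ((memLp_id_gaussianReal 1).integrable le_rfl)).const_mul (v i)

theorem integral_dotProduct_pi_gaussianReal (v : ι → ℝ) : ∫ x, v ⬝ᵥ x ∂γ = 0 := by
  simp only [dotProduct]
  rw [integral_finsetSum _ fun i _ =>
    (integrable_eval ((memLp_id_gaussianReal 1).integrable le_rfl)).const_mul (v i)]
  simp [integral_const_mul, integral_eval, integral_id_gaussianReal]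

theorem lintegral_ofReal_exp_pi_gaussianReal_comp_add_const (v : ι → ℝ) {g : (ι → ℝ) → ℝ}
    (hg : Measurable g) :
    ∫⁻ x, ENNReal.ofReal (exp (g x)) ∂γ
      = ∫⁻ x, ENNReal.ofReal (exp (g (x + v) - v ⬝ᵥ x - v ⬝ᵥ v / 2)) ∂γ := by
  rw [lintegral_pi_gaussianReal_comp_add_const v (by fun_prop)]
  refine lintegral_congr fun x => ?_
  rw [← ENNReal.ofReal_mul (exp_pos _).le, ← exp_add]
  ring_nf

theorem integral_exp_pi_gaussianReal_comp_add_const (v : ι → ℝ) {g : (ι → ℝ) → ℝ}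
    (hg : Measurable g) :
    ∫ x, exp (g x) ∂γ = ∫ x, exp (g (x + v) - v ⬝ᵥ x - v ⬝ᵥ v / 2) ∂γ := by
  rw [integral_eq_lintegral_of_nonneg_ae (ae_of_all _ fun _ => (exp_pos _).le)
      (by fun_prop : Measurable _).aestronglyMeasurable,
    integral_eq_lintegral_of_nonneg_ae (ae_of_all _ fun _ => (exp_pos _).le)
      (by fun_prop : Measurable _).aestronglyMeasurable,
    lintegral_ofReal_exp_pi_gaussianReal_comp_add_const v hg]

theorem MeasureTheory.Integrable.exp_comp_add_const_pi_gaussianReal (v : ι → ℝ) {g : (ι → ℝ) → ℝ}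
    (hg : Measurable g) (hint : Integrable (fun x => exp (g x)) γ) :
    Integrable (fun x => exp (g (x + v) - v ⬝ᵥ x - v ⬝ᵥ v / 2)) γ := by
  refine ⟨(by fun_prop : Measurable _).aestronglyMeasurable, ?_⟩
  rw [hasFiniteIntegral_iff_ofReal (ae_of_all _ fun _ => (exp_pos _).le),
    ← lintegral_ofReal_exp_pi_gaussianReal_comp_add_const v hg,
    ← hasFiniteIntegral_iff_ofReal (ae_of_all _ fun _ => (exp_pos _).le)]
  exact hint.hasFiniteIntegral

end StandardGaussian

theorem neg_log_integral_exp_neg_le_gaussian_shift_general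
    (m : ℕ)
    (f : (Fin m → ℝ) → ℝ) (hf : Measurable f) (C : ℝ) (hfbd : ∀ x, |f x| ≤ C)
    (v : Fin m → ℝ) :
    - Real.log (∫ x, Real.exp (-(f x)) ∂(Measure.pi fun _ : Fin m => gaussianReal 0 1)) ≤
      (1 / 2) * (∑ i, (v i) ^ 2) +
        ∫ x, f (x + v) ∂(Measure.pi fun _ : Fin m => gaussianReal 0 1) := by
  set γ : Measure (Fin m → ℝ) := Measure.pi fun _ => gaussianReal 0 1
  have hfv : Measurable fun x => f (x + v) := hf.comp (measurable_add_const v)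
  have hf_int : Integrable (fun x => f (x + v)) γ :=
    Integrable.of_bound hfv.aestronglyMeasurable C (ae_of_all _ fun x => hfbd (x + v))
  have hexp_int : Integrable (fun x => exp (-f x)) γ :=
    Integrable.of_bound hf.neg.exp.aestronglyMeasurable (exp C) (ae_of_all _ fun x => by
      rw [norm_of_nonneg (exp_pos _).le, exp_le_exp]
      exact neg_le.mpr (abs_le.mp (hfbd x)).1)
  have hlin_int : Integrable (fun x => -f (x + v) - v ⬝ᵥ x) γ :=
    hf_int.neg.sub (integrable_dotProduct_pi_gaussianReal v)
  have hg_int : Integrable (fun x => -f (x + v) - v ⬝ᵥ x - v ⬝ᵥ v / 2) γ :=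
    hlin_int.sub (integrable_const _)
  have hmean : ∫ x, (-f (x + v) - v ⬝ᵥ x - v ⬝ᵥ v / 2) ∂γ = -∫ x, f (x + v) ∂γ - v ⬝ᵥ v / 2 := by
    rw [integral_sub hlin_int (integrable_const _),
      integral_sub (f := fun x => -f (x + v)) hf_int.neg (integrable_dotProduct_pi_gaussianReal v),
      integral_neg, integral_dotProduct_pi_gaussianReal, integral_const]
    simp
  have jensen := integral_le_log_integral_exp hg_int
    (hexp_int.exp_comp_add_const_pi_gaussianReal v (g := fun x => -f x) hf.neg)
  rw [hmean, ← integral_exp_pi_gaussianReal_comp_add_const v (g := fun x => -f x) hf.neg] at jensen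
  have hvv : v ⬝ᵥ v = ∑ i, v i ^ 2 := by simp only [dotProduct, sq]
  linarith

theorem neg_log_integral_exp_neg_le_gaussian_shift
    (m : ℕ) (hm : 1 ≤ m)
    (f : (Fin m → ℝ) → ℝ) (hf : Measurable f) (C : ℝ) (hfbd : ∀ x, |f x| ≤ C)
    (v : Fin m → ℝ) :
    - Real.log (∫ x, Real.exp (-(f x)) ∂(Measure.pi fun _ : Fin m => gaussianReal 0 1)) ≤
      (1 / 2) * (∑ i, (v i) ^ 2) +
        ∫ x, f (x + v) ∂(Measure.pi fun _ : Fin m => gaussianReal 0 1) :=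
  neg_log_integral_exp_neg_le_gaussian_shift_general m f hf C hfbd v
end
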